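/- arXiv:1901.09931 — 2 statements merged into one kernel-verified Lean document; each statement's English description precedes it below -/
import Mathlib

section
/- Let v be a lower semicontinuous function on the closure of a bounded domain Ω contained in a ball B_d, with v ≥ 0 on ∂Ω and v(x₀) < 0 for some x₀ ∈ Ω. Let ṽ denote the extension of min{v,0} by 0 from Ω to the concentric ball B_{2d}, and let Γ_v be the convex envelope of ṽ on B_{2d}. Define V(x₀) := {q ∈ ℝ^{2n} : v(x₀) + ⟨q, ξ − x₀⟩ < 0 for all ξ ∈ closure(B_{2d})}. Then V(x₀) ⊆ ∂Γ_v({Γ_v = ṽ}), the subgradient image of the contact set. -/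
/-!
Minimize `ṽ ξ - ⟪q, ξ⟫` over the compact ball `closure B_{2d}`; since `ṽ` is lower semicontinuous
the minimum is attained at some `x₁`, so the affine function with slope `q` through `(x₁, ṽ x₁)`
lies below `ṽ`. Comparing with `ξ = x₀` and using `q ∈ V(x₀)` gives `ṽ x₁ < 0`, hence `x₁ ∈ Ω`.
An affine minorant touching `ṽ` at an interior point forces `Γ_v = ṽ` there and makes its slope a
subgradient of `Γ_v`.
-/

open Set Metric Filter Topology MeasureTheory

namespace Stmt2

noncomputable section

open Classical

variable {m : ℕ}

/-- The subgradient set of `w` at `x`, relative to the set `S`. -/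
def subgradientSet (S : Set (EuclideanSpace ℝ (Fin m)))
    (w : EuclideanSpace ℝ (Fin m) → ℝ) (x : EuclideanSpace ℝ (Fin m)) :
    Set (EuclideanSpace ℝ (Fin m)) :=
  {p | ∀ y ∈ S, w x + (inner ℝ p (y - x) : ℝ) ≤ w y}

/-- The gradient image `∂w(A)` of a set `A`. -/
def gradientImage (S : Set (EuclideanSpace ℝ (Fin m)))
    (w : EuclideanSpace ℝ (Fin m) → ℝ) (A : Set (EuclideanSpace ℝ (Fin m))) :
    Set (EuclideanSpace ℝ (Fin m)) :=
  ⋃ x ∈ A, subgradientSet S w x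

/-- The extension `ṽ` of `min{v,0}` by `0` from `Ω` to the rest of the space. -/
noncomputable def tildeExt (Ω : Set (EuclideanSpace ℝ (Fin m))) (v : EuclideanSpace ℝ (Fin m) → ℝ) :
    EuclideanSpace ℝ (Fin m) → ℝ :=
  fun x => if x ∈ Ω then min (v x) 0 else 0

/-- The convex envelope over the ball `B_{2d}` (centered at the origin):
the pointwise supremum of all affine functions lying below `w` on `B_{2d}`. -/
noncomputable def convexEnvelope (d : ℝ) (w : EuclideanSpace ℝ (Fin m) → ℝ)
    (x : EuclideanSpace ℝ (Fin m)) : ℝ :=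
  sSup {t : ℝ | ∃ p : EuclideanSpace ℝ (Fin m), ∃ c : ℝ,
    (∀ ξ ∈ ball (0 : EuclideanSpace ℝ (Fin m)) (2 * d), c + (inner ℝ p ξ : ℝ) ≤ w ξ) ∧
    t = c + (inner ℝ p x : ℝ)}

/-- The contact set `{Γ_v = ṽ}` inside `B_{2d}`. -/
def contactSet (d : ℝ) (Ω : Set (EuclideanSpace ℝ (Fin m)))
    (v : EuclideanSpace ℝ (Fin m) → ℝ) : Set (EuclideanSpace ℝ (Fin m)) :=
  {x ∈ ball (0 : EuclideanSpace ℝ (Fin m)) (2 * d) |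
    convexEnvelope d (tildeExt Ω v) x = tildeExt Ω v x}

section Subgradient

variable {S K : Set (EuclideanSpace ℝ (Fin m))} {w : EuclideanSpace ℝ (Fin m) → ℝ}
  {p x : EuclideanSpace ℝ (Fin m)}

theorem subgradientSet_anti (hSK : S ⊆ K) : subgradientSet K w x ⊆ subgradientSet S w x :=
  fun _ hp y hy => hp y (hSK hy)

theorem affine_le_of_mem_subgradientSet (hp : p ∈ subgradientSet S w x) :
    ∀ ξ ∈ S, (w x - inner ℝ p x) + inner ℝ p ξ ≤ w ξ := by
  intro ξ hξ
  have := hp ξ hξ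
  rw [inner_sub_right] at this
  linarith

theorem exists_mem_subgradientSet_of_isCompact (hK : IsCompact K) (hne : K.Nonempty)
    (hw : LowerSemicontinuousOn w K) (q : EuclideanSpace ℝ (Fin m)) :
    ∃ x ∈ K, q ∈ subgradientSet K w x := by
  have hg : LowerSemicontinuousOn (fun ξ => w ξ - inner ℝ q ξ) K := by
    have hlin : Continuous fun ξ : EuclideanSpace ℝ (Fin m) => -inner ℝ q ξ :=
      (continuous_const.inner continuous_id).neg
    simpa only [sub_eq_add_neg] using hw.add (hlin.lowerSemicontinuous.lowerSemicontinuousOn K)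
  obtain ⟨x, hxK, hmin⟩ := hg.exists_isMinOn hne hK
  refine ⟨x, hxK, fun y hy => ?_⟩
  have := isMinOn_iff.mp hmin y hy
  rw [inner_sub_right]
  linarith

end Subgradient

section ConvexEnvelope

variable {d c : ℝ} {w : EuclideanSpace ℝ (Fin m) → ℝ} {p x : EuclideanSpace ℝ (Fin m)}

theorem le_convexEnvelope (hx : x ∈ ball 0 (2 * d))
    (hl : ∀ ξ ∈ ball (0 : EuclideanSpace ℝ (Fin m)) (2 * d), c + inner ℝ p ξ ≤ w ξ) :
    c + inner ℝ p x ≤ convexEnvelope d w x :=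
  le_csSup ⟨w x, by rintro _ ⟨p', c', hl', rfl⟩; exact hl' x hx⟩ ⟨p, c, hl, rfl⟩

theorem convexEnvelope_le (hx : x ∈ ball 0 (2 * d))
    (hl : ∀ ξ ∈ ball (0 : EuclideanSpace ℝ (Fin m)) (2 * d), c + inner ℝ p ξ ≤ w ξ) :
    convexEnvelope d w x ≤ w x :=
  csSup_le ⟨_, p, c, hl, rfl⟩ (by rintro _ ⟨p', c', hl', rfl⟩; exact hl' x hx)

theorem convexEnvelope_eq_of_mem_subgradientSet (hx : x ∈ ball 0 (2 * d))
    (hp : p ∈ subgradientSet (ball 0 (2 * d)) w x) : convexEnvelope d w x = w x := by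
  have hl := affine_le_of_mem_subgradientSet hp
  refine le_antisymm (convexEnvelope_le hx hl) ?_
  simpa using le_convexEnvelope hx hl

theorem subgradientSet_subset_subgradientSet_convexEnvelope (hx : x ∈ ball 0 (2 * d)) :
    subgradientSet (ball 0 (2 * d)) w x ⊆ subgradientSet (ball 0 (2 * d)) (convexEnvelope d w) x := by
  intro p hp y hy
  have := le_convexEnvelope hy (affine_le_of_mem_subgradientSet hp)
  rw [convexEnvelope_eq_of_mem_subgradientSet hx hp, inner_sub_right]
  linarith

end ConvexEnvelope

section TildeExt

variable {Ω : Set (EuclideanSpace ℝ (Fin m))} {v : EuclideanSpace ℝ (Fin m) → ℝ}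

theorem tildeExt_le_zero (x : EuclideanSpace ℝ (Fin m)) : tildeExt Ω v x ≤ 0 := by
  unfold tildeExt
  split_ifs
  exacts [min_le_right _ _, le_rfl]

theorem mem_of_tildeExt_neg {x : EuclideanSpace ℝ (Fin m)} (hx : tildeExt Ω v x < 0) : x ∈ Ω := by
  by_contra h
  simp [tildeExt, h] at hx

theorem lowerSemicontinuous_tildeExt (hv : LowerSemicontinuousOn v (closure Ω))
    (h0 : ∀ x ∈ closure Ω \ Ω, 0 ≤ v x) : LowerSemicontinuous (tildeExt Ω v) := by
  intro x t ht
  have ht0 : t < 0 := ht.trans_le (tildeExt_le_zero x)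
  have hv_near : ∀ᶠ y in 𝓝 x, y ∈ Ω → t < v y := by
    by_cases hx : x ∈ closure Ω
    · have htv : t < v x := by
        by_cases hxΩ : x ∈ Ω
        · simp only [tildeExt, if_pos hxΩ] at ht
          exact ht.trans_le (min_le_left _ _)
        · exact ht0.trans_le (h0 x ⟨hx, hxΩ⟩)
      exact (eventually_nhdsWithin_iff.mp (hv x hx t htv)).mono
        fun y hy hyΩ => hy (subset_closure hyΩ)
    · filter_upwards [isClosed_closure.isOpen_compl.mem_nhds hx] with y hy hyΩ
      exact absurd (subset_closure hyΩ) hy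
  filter_upwards [hv_near] with y hy
  by_cases hyΩ : y ∈ Ω
  · simpa [tildeExt, hyΩ] using And.intro (hy hyΩ) ht0
  · simpa [tildeExt, hyΩ] using ht0

end TildeExt

theorem lowerBall_subset_gradientImage_contactSet_general (n : ℕ) (d : ℝ)
    (Ω : Set (EuclideanSpace ℝ (Fin (2 * n)))) (hΩd : Ω ⊆ ball 0 d)
    (v : EuclideanSpace ℝ (Fin (2 * n)) → ℝ)
    (hlsc : LowerSemicontinuousOn v (closure Ω))
    (hbdry : ∀ x ∈ frontier Ω, 0 ≤ v x)
    (x₀ : EuclideanSpace ℝ (Fin (2 * n))) (hx₀ : x₀ ∈ Ω) (hneg : v x₀ < 0) :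
    {q : EuclideanSpace ℝ (Fin (2 * n)) |
        ∀ ξ ∈ closedBall (0 : EuclideanSpace ℝ (Fin (2 * n))) (2 * d),
          v x₀ + (inner ℝ q (ξ - x₀) : ℝ) < 0}
      ⊆ gradientImage (ball 0 (2 * d)) (convexEnvelope d (tildeExt Ω v))
          (contactSet d Ω v) := by
  intro q hq
  have hΩ : Ω ⊆ ball 0 (2 * d) :=
    hΩd.trans (ball_subset_ball (by linarith [pos_of_mem_ball (hΩd hx₀)]))
  have hx₀K : x₀ ∈ closedBall 0 (2 * d) := ball_subset_closedBall (hΩ hx₀)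
  have hlsc' := lowerSemicontinuous_tildeExt hlsc
    fun x hx => hbdry x ⟨hx.1, fun h => hx.2 (interior_subset h)⟩
  obtain ⟨x₁, hx₁K, hq₁⟩ := exists_mem_subgradientSet_of_isCompact (isCompact_closedBall 0 (2 * d))
    ⟨x₀, hx₀K⟩ (hlsc'.lowerSemicontinuousOn _) q
  have hx₁Ω : x₁ ∈ Ω := by
    refine mem_of_tildeExt_neg (v := v) ?_
    have h₀ := hq₁ x₀ hx₀K
    have h₁ := hq x₁ hx₁K
    rw [show tildeExt Ω v x₀ = v x₀ by simp [tildeExt, hx₀, hneg.le]] at h₀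
    rw [← neg_sub x₁ x₀, inner_neg_right] at h₀
    linarith
  have hq₁' := subgradientSet_anti ball_subset_closedBall hq₁
  exact mem_biUnion ⟨hΩ hx₁Ω, convexEnvelope_eq_of_mem_subgradientSet (hΩ hx₁Ω) hq₁'⟩
    (subgradientSet_subset_subgradientSet_convexEnvelope (hΩ hx₁Ω) hq₁')

/-- `V(x₀) ⊆ ∂Γ_v({Γ_v = ṽ})`. -/
theorem lowerBall_subset_gradientImage_contactSet (n : ℕ) (d : ℝ) (hd : 0 < d)
    (Ω : Set (EuclideanSpace ℝ (Fin (2 * n)))) (hΩopen : IsOpen Ω)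
    (hΩconn : IsConnected Ω) (hΩd : Ω ⊆ ball 0 d)
    (v : EuclideanSpace ℝ (Fin (2 * n)) → ℝ)
    (hlsc : LowerSemicontinuousOn v (closure Ω))
    (hbdry : ∀ x ∈ frontier Ω, 0 ≤ v x)
    (x₀ : EuclideanSpace ℝ (Fin (2 * n))) (hx₀ : x₀ ∈ Ω) (hneg : v x₀ < 0) :
    {q : EuclideanSpace ℝ (Fin (2 * n)) |
        ∀ ξ ∈ closedBall (0 : EuclideanSpace ℝ (Fin (2 * n))) (2 * d),
          v x₀ + (inner ℝ q (ξ - x₀) : ℝ) < 0}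
      ⊆ gradientImage (ball 0 (2 * d)) (convexEnvelope d (tildeExt Ω v))
          (contactSet d Ω v) :=
  lowerBall_subset_gradientImage_contactSet_general n d Ω hΩd v hlsc hbdry x₀ hx₀ hneg

end
end Stmt2
end

section
/- For any positive semidefinite Hermitian-structured real symmetric 2n×2n matrix A (the real Hessian of a convex function), writing H for the associated complex Hessian n×n matrix obtained by H_{jk} = (1/4)(A_{jk} + A_{(n+j)(n+k)} + i(A_{j(n+k)} − A_{(n+j)k})) under the identification ℂⁿ ≅ ℝ^{2n}, one has det(H) ≥ 2^{−n}·√(det A). -/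
open Matrix

namespace Stmt7

/-- The complex `n×n` matrix associated to a real symmetric `2n×2n` matrix
(indexed by `Fin n ⊕ Fin n`, where `inl` are the `x`-directions and `inr` the
`y`-directions) under the identification `ℂⁿ ≅ ℝ^{2n}`:
`H_{jk} = (1/4)(A_{jk} + A_{(n+j)(n+k)} + i (A_{j(n+k)} - A_{(n+j)k}))`. -/
noncomputable def complexHessianOfReal {n : ℕ} (A : Matrix (Fin n ⊕ Fin n) (Fin n ⊕ Fin n) ℝ) :
    Matrix (Fin n) (Fin n) ℂ :=
  Matrix.of fun j k =>
    (((A (Sum.inl j) (Sum.inl k) + A (Sum.inr j) (Sum.inr k) : ℝ) : ℂ)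
      + Complex.I * ((A (Sum.inl j) (Sum.inr k) - A (Sum.inr j) (Sum.inl k) : ℝ) : ℂ)) / 4

end Stmt7

/-!
Let `J` be multiplication by `i` on `ℝ^{2n}`. The `J`-invariant part `B = (A + JᵀAJ)/2` of `A` is
the realification of `2H`, so `det B = |det (2H)|² = (2ⁿ det H)²`, and `det H ≥ 0` because
`H = Pᴴ A P` for the matrix `P` of the Wirtinger derivatives `∂/∂z̄ₖ`. As `A` and `JᵀAJ` are
positive semidefinite with the same determinant, log-concavity of `det` gives `det A ≤ det B`.
-/

open Complex ComplexOrder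

variable {m : Type*} [Fintype m] [DecidableEq m]

theorem Matrix.PosSemidef.sqrt_det_le_det_half_one_add {K : Matrix m m ℝ} (hK : K.PosSemidef) :
    √K.det ≤ ((1 / 2 : ℝ) • (1 + K)).det := by
  set μ := hK.1.eigenvalues
  have hdet : ((1 / 2 : ℝ) • (1 + K)).det = ∏ i, (1 + μ i) / 2 := by
    set U := hK.1.eigenvectorUnitary
    conv_lhs => rw [hK.1.spectral_theorem, ← map_one (Unitary.conjStarAlgAut ℝ (Matrix m m ℝ) U),
      ← map_add, ← map_smul]
    rw [Unitary.conjStarAlgAut_apply, det_mul, det_mul, mul_right_comm, ← det_mul,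
      Unitary.mul_star_self_of_mem U.2, det_one, one_mul]
    simp [μ, ← diagonal_one, det_diagonal, div_eq_inv_mul, Finset.prod_mul_distrib]
  rw [hK.1.det_eq_prod_eigenvalues, hdet]
  simp only [RCLike.ofReal_real_eq_id, id]
  rw [Real.sqrt_prod _ fun i _ => hK.eigenvalues_nonneg i]
  refine Finset.prod_le_prod (fun i _ => Real.sqrt_nonneg _) fun i _ => ?_
  nlinarith [Real.sq_sqrt (hK.eigenvalues_nonneg i), sq_nonneg (1 - √(μ i))]

open scoped MatrixOrder in
theorem Matrix.PosSemidef.sqrt_det_mul_det_le_det_midpoint {X Y : Matrix m m ℝ}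
    (hX : X.PosSemidef) (hY : Y.PosSemidef) :
    √(X.det * Y.det) ≤ ((1 / 2 : ℝ) • (X + Y)).det := by
  rcases hX.det_nonneg.eq_or_lt with hX0 | hXpos
  · rw [← hX0, zero_mul, Real.sqrt_zero]
    exact ((hX.add hY).smul (by norm_num)).det_nonneg
  obtain ⟨R, rfl⟩ := CStarAlgebra.nonneg_iff_eq_star_mul_self.mp hX.nonneg
  rw [star_eq_conjTranspose] at hXpos ⊢
  have hR : IsUnit R.det := isUnit_iff_ne_zero.mpr fun h => by simp [h] at hXpos
  obtain ⟨K, hK, rfl⟩ : ∃ K : Matrix m m ℝ, K.PosSemidef ∧ Y = Rᴴ * K * R := by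
    refine ⟨_, hY.conjTranspose_mul_mul_same R⁻¹, ?_⟩
    rw [conjTranspose_nonsing_inv, mul_assoc _ Y,
      mul_nonsing_inv_cancel_left _ _ (by simpa using hR), nonsing_inv_mul_cancel_right _ _ hR]
  have hmid : (1 / 2 : ℝ) • (Rᴴ * R + Rᴴ * K * R) = Rᴴ * ((1 / 2 : ℝ) • (1 + K)) * R := by
    rw [Matrix.mul_smul, Matrix.smul_mul, mul_add, add_mul, mul_one]
  calc √((Rᴴ * R).det * (Rᴴ * K * R).det) = √((Rᴴ * R).det * (Rᴴ * R).det * K.det) := by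
        congr 1; rw [det_mul, det_mul, det_mul]; ring
    _ = (Rᴴ * R).det * √K.det := by
        rw [Real.sqrt_mul (mul_self_nonneg _), Real.sqrt_mul_self hXpos.le]
    _ ≤ (Rᴴ * R).det * ((1 / 2 : ℝ) • (1 + K)).det := by
        gcongr; exact hK.sqrt_det_le_det_half_one_add
    _ = _ := by rw [hmid, det_mul, det_mul, det_mul]; ring

open scoped MatrixOrder in
theorem Matrix.PosSemidef.map_ofReal {A : Matrix m m ℝ} (hA : A.PosSemidef) :
    (A.map ofRealHom).PosSemidef := by
  obtain ⟨B, rfl⟩ := CStarAlgebra.nonneg_iff_eq_star_mul_self.mp hA.nonneg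
  rw [star_eq_conjTranspose, Matrix.map_mul, conjTranspose_map _ (fun x => by simp)]
  exact posSemidef_conjTranspose_mul_self _

theorem Matrix.det_fromBlocks_neg_of_mul_self_eq_neg_one {R : Type*} [CommRing R] {i : R}
    (hi : i * i = -1) (S T : Matrix m m R) :
    (fromBlocks S T (-T) S).det = (S + i • T).det * (S - i • T).det := by
  have hconj : fromBlocks 1 0 (-i • 1) 1 * fromBlocks S T (-T) S * fromBlocks 1 0 (i • 1) 1
      = fromBlocks (S + i • T) T 0 (S - i • T) := by
    simp only [fromBlocks_multiply, fromBlocks_inj]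
    refine ⟨?_, ?_, ?_, ?_⟩ <;> simp [smul_smul, hi, sub_eq_neg_add]
  simpa [det_fromBlocks_zero₁₂, det_fromBlocks_zero₂₁] using congrArg det hconj

theorem Matrix.det_fromBlocks_neg_eq_normSq (S T : Matrix m m ℝ) :
    (fromBlocks S T (-T) S).det = normSq (S.map ofRealHom + I • T.map ofRealHom).det := by
  set M := S.map ofRealHom + I • T.map ofRealHom
  have hconj : S.map ofRealHom - I • T.map ofRealHom = M.map (starRingEnd ℂ) := by
    ext j k; simp [M, sub_eq_add_neg]
  have hc : ((fromBlocks S T (-T) S).det : ℂ) = normSq M.det := by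
    rw [← ofRealHom_eq_coe, RingHom.map_det, RingHom.mapMatrix_apply, fromBlocks_map,
      Matrix.map_neg _ (map_neg ofRealHom), det_fromBlocks_neg_of_mul_self_eq_neg_one I_mul_I,
      hconj, ← RingHom.mapMatrix_apply (f := starRingEnd ℂ), ← RingHom.map_det, mul_conj]
  exact_mod_cast hc

namespace Stmt7

/-- Column `k` is the Wirtinger derivative `∂/∂z̄ₖ = (∂/∂xₖ + i ∂/∂yₖ) / 2`. -/
noncomputable def wirtinger (m : Type*) [DecidableEq m] : Matrix (m ⊕ m) m ℂ :=
  fromRows ((1 / 2 : ℂ) • 1) ((I / 2) • 1)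

theorem complexHessianOfReal_eq {n : ℕ} (A : Matrix (Fin n ⊕ Fin n) (Fin n ⊕ Fin n) ℝ) :
    complexHessianOfReal A = (wirtinger (Fin n))ᴴ * A.map ofRealHom * wirtinger (Fin n) := by
  ext j k
  simp only [complexHessianOfReal, wirtinger, of_apply, mul_apply, conjTranspose_apply,
    RCLike.star_def, map_apply, ofRealHom_eq_coe, Fintype.sum_sum_type, fromRows_apply_inl,
    fromRows_apply_inr, Matrix.smul_apply, one_apply, smul_eq_mul, mul_ite, mul_one, mul_zero,
    apply_ite (starRingEnd ℂ), map_div₀, map_one, map_ofNat, map_zero, conj_I, ite_mul, zero_mul,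
    Finset.sum_ite_eq', Finset.mem_univ, if_true]
  push_cast
  linear_combination (A (.inr j) (.inr k) / 4 : ℂ) * I_sq

theorem posSemidef_complexHessianOfReal {n : ℕ} {A : Matrix (Fin n ⊕ Fin n) (Fin n ⊕ Fin n) ℝ}
    (hA : A.PosSemidef) : (complexHessianOfReal A).PosSemidef := by
  rw [complexHessianOfReal_eq]
  exact hA.map_ofReal.conjTranspose_mul_mul_same _

/-- Multiplication by `i` in the coordinates `z = x + i y`. -/
noncomputable def complexStructure (m : Type*) [DecidableEq m] : Matrix (m ⊕ m) (m ⊕ m) ℝ :=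
  fromBlocks 0 (-1) 1 0

theorem det_complexStructure_conj (A : Matrix (m ⊕ m) (m ⊕ m) ℝ) :
    ((complexStructure m)ᴴ * A * complexStructure m).det = A.det := by
  have hJ : (complexStructure m)ᴴ * complexStructure m = 1 := by
    simp [complexStructure, fromBlocks_transpose, fromBlocks_multiply, ← fromBlocks_one]
  rw [det_mul, det_mul, mul_right_comm, ← det_mul, hJ, det_one, one_mul]

theorem half_smul_add_complexStructure_conj (A : Matrix (m ⊕ m) (m ⊕ m) ℝ) :
    (1 / 2 : ℝ) • (A + (complexStructure m)ᴴ * A * complexStructure m) =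
      fromBlocks ((1 / 2 : ℝ) • (A.toBlocks₁₁ + A.toBlocks₂₂))
        ((1 / 2 : ℝ) • (A.toBlocks₁₂ - A.toBlocks₂₁))
        (-((1 / 2 : ℝ) • (A.toBlocks₁₂ - A.toBlocks₂₁)))
        ((1 / 2 : ℝ) • (A.toBlocks₁₁ + A.toBlocks₂₂)) := by
  conv_lhs => rw [← fromBlocks_toBlocks A]
  simp only [complexStructure, conjTranspose_eq_transpose_of_trivial, fromBlocks_transpose,
    fromBlocks_multiply, fromBlocks_add, fromBlocks_smul, fromBlocks_inj, transpose_zero,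
    transpose_one, transpose_neg, zero_mul, mul_zero, one_mul, mul_one, neg_mul, mul_neg]
  refine ⟨?_, ?_, ?_, ?_⟩ <;> module

theorem two_smul_complexHessianOfReal {n : ℕ} (A : Matrix (Fin n ⊕ Fin n) (Fin n ⊕ Fin n) ℝ) :
    (2 : ℂ) • complexHessianOfReal A =
      ((1 / 2 : ℝ) • (A.toBlocks₁₁ + A.toBlocks₂₂)).map ofRealHom
        + I • ((1 / 2 : ℝ) • (A.toBlocks₁₂ - A.toBlocks₂₁)).map ofRealHom := by
  ext j k
  simp only [complexHessianOfReal, toBlocks₁₁, toBlocks₁₂, toBlocks₂₁, toBlocks₂₂, of_apply,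
    Matrix.add_apply, Matrix.sub_apply, Matrix.smul_apply, map_apply, ofRealHom_eq_coe, smul_eq_mul]
  push_cast
  ring

theorem det_half_smul_add_complexStructure_conj {n : ℕ}
    (A : Matrix (Fin n ⊕ Fin n) (Fin n ⊕ Fin n) ℝ) :
    ((1 / 2 : ℝ) • (A + (complexStructure (Fin n))ᴴ * A * complexStructure (Fin n))).det =
      normSq ((2 : ℂ) • complexHessianOfReal A).det := by
  rw [half_smul_add_complexStructure_conj, det_fromBlocks_neg_eq_normSq,
    two_smul_complexHessianOfReal]

theorem det_complexHessian_ge_general (n : ℕ)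
    (A : Matrix (Fin n ⊕ Fin n) (Fin n ⊕ Fin n) ℝ)
    (hpsd : A.PosSemidef) :
    (complexHessianOfReal A).det.im = 0 ∧
      Real.sqrt A.det / 2 ^ n ≤ (complexHessianOfReal A).det.re := by
  obtain ⟨hre, him⟩ := Complex.nonneg_iff.mp (posSemidef_complexHessianOfReal hpsd).det_nonneg
  refine ⟨him.symm, ?_⟩
  set d := (complexHessianOfReal A).det.re
  have hdet : A.det ≤ 2 ^ n * d * (2 ^ n * d) := by
    have hmid := hpsd.sqrt_det_mul_det_le_det_midpoint
      (hpsd.conjTranspose_mul_mul_same (complexStructure (Fin n)))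
    have hH : (complexHessianOfReal A).det = (d : ℂ) := Complex.ext rfl him.symm
    rwa [det_complexStructure_conj, Real.sqrt_mul_self hpsd.det_nonneg,
      det_half_smul_add_complexStructure_conj, det_smul, hH, Fintype.card_fin, ← ofReal_ofNat,
      ← ofReal_pow, ← ofReal_mul, normSq_ofReal] at hmid
  rw [div_le_iff₀ (by positivity), mul_comm, ← Real.sqrt_mul_self (mul_nonneg (by positivity) hre)]
  exact Real.sqrt_le_sqrt hdet

/-- for a positive semidefinite real symmetric `2n×2n` matrix `A`,
the associated complex Hessian `H` satisfies `det H ≥ 2^{-n} √(det A)`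
(in particular `det H` is real). -/
theorem det_complexHessian_ge (n : ℕ)
    (A : Matrix (Fin n ⊕ Fin n) (Fin n ⊕ Fin n) ℝ)
    (hsymm : A.IsSymm) (hpsd : A.PosSemidef) :
    (complexHessianOfReal A).det.im = 0 ∧
      Real.sqrt A.det / 2 ^ n ≤ (complexHessianOfReal A).det.re :=
  det_complexHessian_ge_general n A hpsd

end Stmt7
end
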